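/- Let I be a meager ideal on ω (as a subset of the Cantor space 2^ω) and f ∈ SL(I). Then there exists g ∈ SL(I) with ‖f − g‖ = 2. -/

import Mathlib

open Filter Topology

noncomputable section

abbrev LInf : Type := lp (fun _ : ℕ => ℝ) (⊤ : ENNReal)

def indic (A : Set ℕ) : LInf :=
  ⟨A.indicator (fun _ => (1:ℝ)), memℓp_infty ⟨1, by
    rintro r ⟨n, rfl⟩
    by_cases h : n ∈ A <;> simp [Set.indicator, h]⟩⟩

def IsIdealOmega (I : Set (Set ℕ)) : Prop :=
  (∀ A B : Set ℕ, A ∈ I → B ⊆ A → B ∈ I) ∧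
  (∀ A B : Set ℕ, A ∈ I → B ∈ I → A ∪ B ∈ I) ∧
  (Set.univ : Set ℕ) ∉ I ∧
  (∀ A : Set ℕ, A.Finite → A ∈ I)

def SLI (I : Set (Set ℕ)) : Set (LInf →L[ℝ] ℝ) :=
  {f | (∀ x : LInf, (∀ n, 0 ≤ x n) → 0 ≤ f x) ∧
       (∀ (x : LInf) (a : ℝ), Tendsto (fun n => x n) atTop (𝓝 a) → f x = a) ∧
       (∀ A ∈ I, f (indic A) = 0)}

def UltI (I : Set (Set ℕ)) : Set (Ultrafilter ℕ) :=
  {F | (↑F : Filter ℕ) ≤ cofinite ∧ ∀ A ∈ I, Aᶜ ∈ F}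

def IClusterPoint (I : Set (Set ℕ)) (x : ℕ → ℝ) (η : ℝ) : Prop :=
  ∀ ε > 0, {n | |x n - η| ≤ ε} ∉ I

def IConv (I : Set (Set ℕ)) (x : ℕ → ℝ) (η : ℝ) : Prop :=
  ∀ ε > 0, {n | ε ≤ |x n - η|} ∈ I

def eone : LInf := indic Set.univ

open Set
open scoped Classical



-- cylinder neighborhood basis
lemma cyl_subset_of_open {U : Set (ℕ → Bool)} (hU : IsOpen U) {x : ℕ → Bool} (hx : x ∈ U) :
    ∃ m : ℕ, ∀ y : ℕ → Bool, (∀ i < m, y i = x i) → y ∈ U := by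
  rw [isOpen_pi_iff] at hU
  obtain ⟨I, u, hu, hsub⟩ := hU x hx
  refine ⟨(I.sup id) + 1, fun y hy => hsub ?_⟩
  intro i hi
  rw [hy i (Nat.lt_succ_of_le (Finset.le_sup (f := id) hi))]
  exact (hu i hi).2

lemma nwd_ext {F : Set (ℕ → Bool)} (hFc : IsClosed F) (hF : IsNowhereDense F)
    (s : ℕ → Bool) (n : ℕ) :
    ∃ (m : ℕ) (t : ℕ → Bool), n ≤ m ∧ (∀ i < n, t i = s i) ∧ ∀ y : ℕ → Bool, (∀ i < m, y i = t i) → y ∉ F := by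
  have hd : Dense Fᶜ := by
    rw [IsNowhereDense, hFc.closure_eq] at hF
    rwa [interior_eq_empty_iff_dense_compl] at hF
  -- the cylinder of s at level n is open and nonempty
  have hcylopen : IsOpen {y : ℕ → Bool | ∀ i < n, y i = s i} := by
    have : {y : ℕ → Bool | ∀ i < n, y i = s i} =
        (Finset.range n : Set ℕ).pi (fun i => {s i}) := by
      ext y; simp [Set.mem_pi]
    rw [this]
    exact isOpen_set_pi (Finset.range n).finite_toSet (fun i _ => isOpen_discrete _)
  obtain ⟨x, hx1, hx2⟩ := hd.inter_open_nonempty _ hcylopen ⟨s, fun i _ => rfl⟩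
  obtain ⟨m, hm⟩ := cyl_subset_of_open hFc.isOpen_compl hx2
  refine ⟨max m n, x, le_max_right _ _, fun i hi => hx1 i hi, fun y hy => ?_⟩
  exact hm y (fun i hi => hy i (lt_of_lt_of_le hi (le_max_left _ _)))

lemma nwd_ext_list {F : Set (ℕ → Bool)} (hFc : IsClosed F) (hF : IsNowhereDense F)
    (L : List (ℕ → Bool)) (n : ℕ) :
    ∃ (m : ℕ) (t : ℕ → Bool), n ≤ m ∧ ∀ s ∈ L, ∀ y : ℕ → Bool, (∀ i < n, y i = s i) →
      (∀ i, n ≤ i → i < m → y i = t i) → y ∉ F := by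
  induction L with
  | nil => exact ⟨n, (fun _ => false), le_rfl, by simp⟩
  | cons s L ih =>
    obtain ⟨m', t', hm', havoid'⟩ := ih
    obtain ⟨m, u, hmm', hu1, hu2⟩ := nwd_ext hFc hF
      (fun i => if i < n then s i else t' i) m'
    refine ⟨m, u, le_trans hm' hmm', ?_⟩
    intro s' hs' y hylow hyhigh
    rcases List.mem_cons.mp hs' with rfl | hs'
    · -- s' = s : use the avoidance of the new cylinder
      refine hu2 y (fun i hi => ?_)
      rcases lt_or_ge i n with h1 | h1
      · rw [hylow i h1, hu1 i (lt_of_lt_of_le h1 hm')]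
        simp [h1]
      · exact hyhigh i h1 hi
    · -- s' ∈ L : use prior avoidance; note u = t' on [n, m')
      refine havoid' s' hs' y hylow (fun i h1 h2 => ?_)
      rw [hyhigh i h1 (lt_of_lt_of_le h2 hmm'), hu1 i h2]
      simp [not_lt.mpr h1]

lemma nwd_union {s t : Set (ℕ → Bool)} (hsc : IsClosed s) (htc : IsClosed t)
    (hs : IsNowhereDense s) (ht : IsNowhereDense t) :
    IsClosed (s ∪ t) ∧ IsNowhereDense (s ∪ t) := by
  refine ⟨hsc.union htc, ?_⟩
  rw [IsNowhereDense, (hsc.union htc).closure_eq, interior_eq_empty_iff_dense_compl,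
    Set.compl_union]
  have hds : Dense sᶜ := by
    rw [IsNowhereDense, hsc.closure_eq, interior_eq_empty_iff_dense_compl] at hs; exact hs
  have hdt : Dense tᶜ := by
    rw [IsNowhereDense, htc.closure_eq, interior_eq_empty_iff_dense_compl] at ht; exact ht
  exact hds.inter_of_isOpen_left hdt hsc.isOpen_compl

lemma mem_foldr_union (l : List (Finset ℕ)) (i : ℕ) :
    i ∈ l.foldr (· ∪ ·) ∅ ↔ ∃ b ∈ l, i ∈ b := by
  induction l with
  | nil => simp
  | cons a l ih => simp [ih]

lemma blocks_exist (G : ℕ → Set (ℕ → Bool))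
    (hGc : ∀ k, IsClosed (G k)) (hGn : ∀ k, IsNowhereDense (G k))
    (hGm : ∀ j k, j ≤ k → G j ⊆ G k) :
    ∃ (n : ℕ → ℕ) (S : ℕ → Finset ℕ),
      (∀ k, (S k).Nonempty) ∧
      (∀ k, ∀ i ∈ S k, n k ≤ i ∧ i < n (k+1)) ∧
      StrictMono n ∧
      (∀ C : Set ℕ, C.Infinite → ∀ x : ℕ → Bool,
        (∀ i, x i = true ↔ ∃ k ∈ C, i ∈ S k) → ∀ j, x ∉ G j) := by
  classical
  have H : ∀ (k n : ℕ) (L : List (ℕ → Bool)), ∃ (m : ℕ) (t : ℕ → Bool), n ≤ m ∧ ∀ s ∈ L,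
      ∀ y : ℕ → Bool, (∀ i < n, y i = s i) → (∀ i, n ≤ i → i < m → y i = t i) → y ∉ G k :=
    fun k n L => nwd_ext_list (hGc k) (hGn k) L n
  choose M T hM hAvoid using H
  let pref : List (Finset ℕ) → List (ℕ → Bool) := fun bs =>
    bs.sublists.map (fun sub => fun i => decide (i ∈ sub.foldr (· ∪ ·) ∅))
  let step : ℕ → ℕ × List (Finset ℕ) → ℕ × List (Finset ℕ) := fun k st =>
    (M k st.1 (pref st.2) + 1,
     st.2 ++ [insert (M k st.1 (pref st.2))
       ((Finset.Ico st.1 (M k st.1 (pref st.2))).filter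
         (fun i => T k st.1 (pref st.2) i = true))])
  let seq : ℕ → ℕ × List (Finset ℕ) := fun k => Nat.rec ((0, []) : ℕ × List (Finset ℕ)) step k
  let n : ℕ → ℕ := fun k => (seq k).1
  let S : ℕ → Finset ℕ := fun k =>
    insert (M k (n k) (pref (seq k).2))
      ((Finset.Ico (n k) (M k (n k) (pref (seq k).2))).filter
        (fun i => T k (n k) (pref (seq k).2) i = true))
  have hseq : ∀ k, seq (k+1) = (M k (n k) (pref (seq k).2) + 1, (seq k).2 ++ [S k]) :=
    fun k => rfl
  have hn1 : ∀ k, n (k+1) = M k (n k) (pref (seq k).2) + 1 := fun k => rfl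
  have hMk : ∀ k, n k ≤ M k (n k) (pref (seq k).2) := fun k => hM k (n k) (pref (seq k).2)
  have hmono : StrictMono n := by
    apply strictMono_nat_of_lt_succ
    intro k
    rw [hn1 k]
    exact Nat.lt_succ_of_le (hMk k)
  have hrange : ∀ k, ∀ i ∈ S k, n k ≤ i ∧ i < n (k+1) := by
    intro k i hi
    rw [Finset.mem_insert] at hi
    rcases hi with rfl | hi
    · exact ⟨hMk k, by rw [hn1 k]; exact Nat.lt_succ_self _⟩
    · rw [Finset.mem_filter, Finset.mem_Ico] at hi
      exact ⟨hi.1.1, by rw [hn1 k]; exact Nat.lt_succ_of_lt hi.1.2⟩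
  have hlist : ∀ k, (seq k).2 = (List.range k).map S := by
    intro k
    induction k with
    | zero => rfl
    | succ k ih => rw [hseq k, List.range_succ, List.map_append, ← ih]; rfl
  refine ⟨n, S, fun k => ⟨_, Finset.mem_insert_self _ _⟩, hrange, hmono, ?_⟩
  intro C hC x hx j hxG
  obtain ⟨k, hkC, hjk⟩ := hC.exists_gt j
  -- the prefix corresponding to blocks indexed by C below k
  set mk := M k (n k) (pref (seq k).2) with hmkdef
  set tk := T k (n k) (pref (seq k).2) with htkdef
  let sub : List (Finset ℕ) := ((List.range k).filter (fun k' => decide (k' ∈ C))).map S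
  have hsub : sub ∈ (seq k).2.sublists := by
    rw [List.mem_sublists, hlist k]
    exact List.Sublist.map S List.filter_sublist
  let s : ℕ → Bool := fun i => decide (i ∈ sub.foldr (· ∪ ·) ∅)
  have hs : s ∈ pref (seq k).2 := List.mem_map.mpr ⟨sub, hsub, rfl⟩
  -- blocks live in disjoint intervals
  have hloc : ∀ k' i, i ∈ S k' → n k' ≤ i ∧ i < n (k'+1) := hrange
  have hlow : ∀ i < n k, x i = s i := by
    intro i hi
    rw [Bool.eq_iff_iff, hx i]
    show _ ↔ (decide (i ∈ sub.foldr (· ∪ ·) ∅) = true)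
    rw [decide_eq_true_eq, mem_foldr_union]
    constructor
    · rintro ⟨k', hk'C, hik'⟩
      have hk'k : k' < k := by
        by_contra h
        push_neg at h
        exact absurd ((hmono.le_iff_le.mpr h).trans (hloc k' i hik').1) (not_le.mpr hi)
      exact ⟨S k', List.mem_map.mpr ⟨k', List.mem_filter.mpr
        ⟨List.mem_range.mpr hk'k, by simpa using hk'C⟩, rfl⟩, hik'⟩
    · rintro ⟨b, hb, hib⟩
      obtain ⟨k', hk', rfl⟩ := List.mem_map.mp hb
      rw [List.mem_filter] at hk'
      exact ⟨k', by simpa using hk'.2, hib⟩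
  have hhigh : ∀ i, n k ≤ i → i < mk → x i = tk i := by
    intro i h1 h2
    rw [Bool.eq_iff_iff, hx i]
    constructor
    · rintro ⟨k', hk'C, hik'⟩
      have hik := hloc k' i hik'
      have hkk' : k' = k := by
        rcases lt_trichotomy k' k with h | h | h
        · exfalso
          have h5 : n (k'+1) ≤ n k := hmono.le_iff_le.mpr h
          have h6 := hik.2
          omega
        · exact h
        · exfalso
          have : n (k+1) ≤ n k' := hmono.le_iff_le.mpr h
          have : n (k+1) ≤ i := this.trans hik.1
          rw [hn1 k] at this
          omega
      subst hkk'
      rw [Finset.mem_insert] at hik'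
      rcases hik' with rfl | hik'
      · omega
      · rw [Finset.mem_filter] at hik'
        exact hik'.2
    · intro ht
      refine ⟨k, hkC, ?_⟩
      exact Finset.mem_insert_of_mem (Finset.mem_filter.mpr ⟨Finset.mem_Ico.mpr ⟨h1, h2⟩, ht⟩)
  exact hAvoid k (n k) (pref (seq k).2) s hs x hlow hhigh (hGm j k (le_of_lt hjk) hxG)

lemma indic_apply (A : Set ℕ) (n : ℕ) :
    (indic A) n = if n ∈ A then (1:ℝ) else 0 := by
  change A.indicator (fun _ => (1:ℝ)) n = _
  by_cases h : n ∈ A <;> simp [Set.indicator, h]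

lemma eone_apply (n : ℕ) : (eone) n = 1 := by
  rw [eone, indic_apply]; simp

lemma abs_apply_le_norm (x : LInf) (n : ℕ) : |x n| ≤ ‖x‖ := by
  have := lp.norm_apply_le_norm (E := fun _ : ℕ => ℝ) ENNReal.top_ne_zero x n
  rwa [Real.norm_eq_abs] at this

lemma indic_union_disjoint {A B : Set ℕ} (h : Disjoint A B) :
    indic (A ∪ B) = indic A + indic B := by
  apply lp.ext
  rw [lp.coeFn_add]
  funext n
  have : (A ∪ B).indicator (fun _ => (1:ℝ)) = A.indicator (fun _ => (1:ℝ)) + B.indicator (fun _ => (1:ℝ)) :=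
    Set.indicator_union_of_disjoint h _
  show (A ∪ B).indicator (fun _ => (1:ℝ)) n = A.indicator (fun _ => (1:ℝ)) n + B.indicator (fun _ => (1:ℝ)) n
  rw [this]; rfl

section hfacts
variable {h : LInf →L[ℝ] ℝ}
variable (hpos : ∀ x : LInf, (∀ n, 0 ≤ x n) → 0 ≤ h x)
variable (hlim : ∀ (x : LInf) (a : ℝ), Tendsto (fun n => x n) atTop (𝓝 a) → h x = a)

include hlim in
lemma h_eone : h eone = 1 := by
  apply hlim
  have : (fun n => (eone) n) = fun _ => (1:ℝ) := funext eone_apply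
  rw [this]; exact tendsto_const_nhds

include hpos hlim in
lemma h_bound (x : LInf) : |h x| ≤ ‖x‖ := by
  have he := h_eone hlim
  rw [abs_le]
  constructor
  · have := hpos (‖x‖ • eone + x) (fun n => by
      have h1 := abs_apply_le_norm x n
      have : (‖x‖ • eone + x) n = ‖x‖ * 1 + x n := by
        rw [lp.coeFn_add, Pi.add_apply, lp.coeFn_smul, Pi.smul_apply, eone_apply]; rfl
      rw [this]
      have := abs_le.mp h1
      linarith)
    rw [map_add, map_smul, smul_eq_mul, he, mul_one] at this
    linarith
  · have := hpos (‖x‖ • eone - x) (fun n => by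
      have h1 := abs_apply_le_norm x n
      have : (‖x‖ • eone - x) n = ‖x‖ * 1 - x n := by
        rw [lp.coeFn_sub, Pi.sub_apply, lp.coeFn_smul, Pi.smul_apply, eone_apply]; rfl
      rw [this]
      have := abs_le.mp h1
      linarith)
    rw [map_sub, map_smul, smul_eq_mul, he, mul_one] at this
    linarith

include hpos in
lemma h_indic_nonneg (A : Set ℕ) : 0 ≤ h (indic A) := by
  apply hpos
  intro n; rw [indic_apply]; split <;> norm_num

include hpos in
lemma h_mono {A B : Set ℕ} (hAB : A ⊆ B) : h (indic A) ≤ h (indic B) := by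
  have := hpos (indic B - indic A) (fun n => by
    rw [lp.coeFn_sub, Pi.sub_apply, indic_apply, indic_apply]
    by_cases hA : n ∈ A
    · simp [hA, hAB hA]
    · split <;> norm_num)
  rw [map_sub] at this
  linarith

include hpos hlim in
lemma h_indic_le_one (A : Set ℕ) : h (indic A) ≤ 1 := by
  have := h_mono hpos (Set.subset_univ A)
  rwa [show indic Set.univ = eone from rfl, h_eone hlim] at this

include hlim in
lemma h_finite {A : Set ℕ} (hA : A.Finite) : h (indic A) = 0 := by
  apply hlim
  apply Tendsto.congr' _ tendsto_const_nhds
  have : ∀ᶠ n in atTop, n ∉ A := by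
    rw [← Nat.cofinite_eq_atTop]
    exact hA.compl_mem_cofinite
  filter_upwards [this] with n hn
  rw [indic_apply, if_neg hn]

end hfacts

section glim
variable (U : Ultrafilter ℕ)

lemma exists_ulim (x : LInf) : ∃ a : ℝ, Tendsto (fun n => x n) (U : Filter ℕ) (𝓝 a) := by
  have hc : IsCompact (Icc (-‖x‖) ‖x‖) := isCompact_Icc
  have hmem : (↑(Ultrafilter.map (fun n => x n) U) : Filter ℝ) ≤ 𝓟 (Icc (-‖x‖) ‖x‖) := by
    rw [le_principal_iff]
    show (fun n => x n) ⁻¹' (Icc (-‖x‖) ‖x‖) ∈ U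
    have : (fun n => x n) ⁻¹' (Icc (-‖x‖) ‖x‖) = univ := by
      ext n
      simp only [mem_preimage, mem_Icc, mem_univ, iff_true]
      exact abs_le.mp (abs_apply_le_norm x n)
    rw [this]
    exact univ_mem
  obtain ⟨a, _, ha⟩ := hc.ultrafilter_le_nhds _ hmem
  exact ⟨a, ha⟩

def glim (x : LInf) : ℝ := Classical.choose (exists_ulim U x)

lemma glim_spec (x : LInf) : Tendsto (fun n => x n) (U : Filter ℕ) (𝓝 (glim U x)) :=
  Classical.choose_spec (exists_ulim U x)

lemma glim_eq {x : LInf} {a : ℝ} (h : Tendsto (fun n => x n) (U : Filter ℕ) (𝓝 a)) :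
    glim U x = a :=
  tendsto_nhds_unique (glim_spec U x) h

def gfun : LInf →L[ℝ] ℝ :=
  LinearMap.mkContinuous
    { toFun := glim U
      map_add' := fun x y => by
        apply glim_eq
        have hx := glim_spec U x
        have hy := glim_spec U y
        have := hx.add hy
        apply Tendsto.congr _ this
        intro n
        rw [lp.coeFn_add]; rfl
      map_smul' := fun c x => by
        apply glim_eq
        have hx := glim_spec U x
        have := hx.const_mul c
        apply Tendsto.congr _ this
        intro n
        rw [lp.coeFn_smul]; rfl }
    1 (fun x => by
      have h1 : ∀ n, x n ∈ Icc (-‖x‖) ‖x‖ := fun n => mem_Icc.mpr (abs_le.mp (abs_apply_le_norm x n))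
      have h2 : glim U x ∈ Icc (-‖x‖) ‖x‖ :=
        isClosed_Icc.mem_of_tendsto (glim_spec U x) (Eventually.of_forall h1)
      rw [one_mul, Real.norm_eq_abs, abs_le]
      exact mem_Icc.mp h2)

lemma gfun_apply (x : LInf) : gfun U x = glim U x := rfl

end glim

theorem stmt11 (I : Set (Set ℕ)) (hI : IsIdealOmega I)
    (hmeager : IsMeagre {f : ℕ → Bool | {n | f n = true} ∈ I})
    (f : LInf →L[ℝ] ℝ) (hf : f ∈ SLI I) :
    ∃ g ∈ SLI I, ‖f - g‖ = 2 := by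
  classical
  obtain ⟨hdown, hunion, huniv, hfin⟩ := hI
  obtain ⟨hpos, hlim, hvanish⟩ := hf
  -- extract a countable family of nowhere dense sets covering the ideal
  rw [isMeagre_iff_countable_union_isNowhereDense] at hmeager
  obtain ⟨𝒮, hnwd, hcount, hcover⟩ := hmeager
  have hFex : ∃ F : ℕ → Set (ℕ → Bool), (∀ k, IsNowhereDense (F k)) ∧
      {f : ℕ → Bool | {n | f n = true} ∈ I} ⊆ ⋃ k, F k := by
    rcases Set.eq_empty_or_nonempty 𝒮 with rfl | hne
    · refine ⟨fun _ => ∅, fun _ => isNowhereDense_empty, ?_⟩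
      intro y hy
      simpa using hcover hy
    · obtain ⟨F, hFr⟩ := Set.Countable.exists_eq_range hcount hne
      refine ⟨F, fun k => hnwd _ (hFr ▸ mem_range_self k), ?_⟩
      rwa [hFr, sUnion_range] at hcover
  obtain ⟨F, hFnwd, hFcover⟩ := hFex
  -- an increasing family of closed nowhere dense sets
  let G : ℕ → Set (ℕ → Bool) :=
    fun k => Nat.rec (closure (F 0)) (fun k Gk => Gk ∪ closure (F (k+1))) k
  have hGsucc : ∀ k, G (k+1) = G k ∪ closure (F (k+1)) := fun k => rfl
  have hGcn : ∀ k, IsClosed (G k) ∧ IsNowhereDense (G k) := by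
    intro k; induction k with
    | zero => exact ⟨isClosed_closure, (hFnwd 0).closure⟩
    | succ k ih => exact nwd_union ih.1 isClosed_closure ih.2 (hFnwd (k+1)).closure
  have hGm : ∀ j k, j ≤ k → G j ⊆ G k := by
    have hmon : Monotone G :=
      monotone_nat_of_le_succ (fun k => by rw [hGsucc]; exact subset_union_left)
    exact fun j k h => hmon h
  have hFG : ∀ k, F k ⊆ G k := by
    intro k
    cases k with
    | zero => exact subset_closure
    | succ k => exact subset_closure.trans (by rw [hGsucc]; exact subset_union_right)
  obtain ⟨n, S, hSne, hSrange, hnmono, havoid⟩ :=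
    blocks_exist G (fun k => (hGcn k).1) (fun k => (hGcn k).2) hGm
  -- every union of infinitely many blocks is I-positive
  have hkey : ∀ C : Set ℕ, C.Infinite → (⋃ k ∈ C, (S k : Set ℕ)) ∉ I := by
    intro C hC hmem
    set x : ℕ → Bool := fun i => decide (∃ k ∈ C, i ∈ S k) with hxdef
    have hxiff : ∀ i, x i = true ↔ ∃ k ∈ C, i ∈ S k := fun i => by
      simp [hxdef]
    have hxM : x ∈ {f : ℕ → Bool | {n | f n = true} ∈ I} := by
      show {i | x i = true} ∈ I
      have : {i | x i = true} = ⋃ k ∈ C, (S k : Set ℕ) := by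
        ext i
        simp only [mem_setOf_eq, hxiff i, mem_iUnion, Finset.mem_coe, exists_prop]
      rwa [this]
    obtain ⟨_, ⟨j, rfl⟩, hj⟩ := hFcover hxM
    exact havoid C hC x hxiff j (hFG j hj)
  -- blocks are pairwise disjoint
  have hSdisj : ∀ k k', k ≠ k' → Disjoint (S k : Set ℕ) (S k') := by
    intro k k' hne
    rw [Set.disjoint_left]
    intro i hik hik'
    have h1 := hSrange k i hik
    have h2 := hSrange k' i hik'
    rcases hne.lt_or_gt with h | h
    · have : n (k+1) ≤ n k' := hnmono.le_iff_le.mpr h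
      omega
    · have : n (k'+1) ≤ n k := hnmono.le_iff_le.mpr h
      omega
  -- the finitely additive measure
  set μ : Set ℕ → ℝ := fun C => f (indic (⋃ k ∈ C, (S k : Set ℕ))) with hμdef
  have hμ0 : ∀ C, 0 ≤ μ C := fun C => h_indic_nonneg hpos _
  have hμ1 : ∀ C, μ C ≤ 1 := fun C => h_indic_le_one hpos hlim _
  have hμadd : ∀ C D : Set ℕ, Disjoint C D → μ (C ∪ D) = μ C + μ D := by
    intro C D hCD
    have h2 : Disjoint (⋃ k ∈ C, (S k : Set ℕ)) (⋃ k ∈ D, (S k : Set ℕ)) := by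
      rw [Set.disjoint_left]
      intro i hiC hiD
      obtain ⟨k, hkC, hik⟩ := mem_iUnion₂.mp hiC
      obtain ⟨k', hk'D, hik'⟩ := mem_iUnion₂.mp hiD
      rcases eq_or_ne k k' with rfl | hkk'
      · exact Set.disjoint_left.mp hCD hkC hk'D
      · exact Set.disjoint_left.mp (hSdisj k k' hkk') hik hik'
    rw [hμdef]
    simp only
    rw [biUnion_union, indic_union_disjoint h2, map_add]
  have hμfin : ∀ C : Set ℕ, C.Finite → μ C = 0 := by
    intro C hC
    exact h_finite hlim (hC.biUnion (fun k _ => (S k).finite_toSet))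
  -- the almost disjoint family
  set c : (ℕ → Bool) → ℕ → ℕ :=
    fun z m => Encodable.encode (List.ofFn (fun i : Fin m => z i)) with hcdef
  have hcinj : ∀ z, Function.Injective (c z) := by
    intro z a b hab
    have h1 := Encodable.encode_injective hab
    have h2 := congrArg List.length h1
    simpa using h2
  set A : (ℕ → Bool) → Set ℕ := fun z => range (c z) with hAdef
  have hAinf : ∀ z, (A z).Infinite := fun z => infinite_range_of_injective (hcinj z)
  have hAad : ∀ z w : ℕ → Bool, z ≠ w → (A z ∩ A w).Finite := by
    intro z w hzw
    obtain ⟨N, hN⟩ := Function.ne_iff.mp hzw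
    apply Set.Finite.subset ((Set.finite_Iic N).image (c z))
    rintro a ⟨⟨p, rfl⟩, ⟨q, hq⟩⟩
    have henc : List.ofFn (fun i : Fin q => w i) = List.ofFn (fun i : Fin p => z i) :=
      Encodable.encode_injective hq
    have hpq : q = p := by simpa using congrArg List.length henc
    subst hpq
    have hent := List.ofFn_injective henc
    have hpN : q ≤ N := by
      by_contra hcon
      push_neg at hcon
      exact hN (congrFun hent ⟨N, hcon⟩).symm
    exact mem_image_of_mem _ hpN
  -- all but finitely many members of the family are small
  have hZfin : ∀ q : ℕ, {z : ℕ → Bool | 1/(q+1:ℝ) < μ (A z)}.Finite := by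
    intro q
    by_contra hcon
    obtain ⟨s, hs_sub, hs_card⟩ := Set.Infinite.exists_subset_card_eq hcon (q+2)
    have hsum : ∀ t : Finset (ℕ → Bool), ∑ z ∈ t, μ (A z) ≤ μ (⋃ z ∈ t, A z) := by
      intro t
      induction t using Finset.induction_on with
      | empty => simpa using hμ0 ∅
      | @insert z t hzt ih =>
        have hUeq : (⋃ w ∈ (insert z t : Finset (ℕ → Bool)), A w) =
            A z ∪ ⋃ w ∈ t, A w := by
          simp [Set.iUnion_iUnion_eq_or_left]
        have hfinz : (A z ∩ ⋃ w ∈ t, A w).Finite := by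
          rw [inter_iUnion₂]
          exact Set.Finite.biUnion t.finite_toSet
            (fun w hw => hAad z w (fun hzw => hzt (hzw ▸ hw)))
        have e1 : μ (A z ∪ ⋃ w ∈ t, A w) = μ (A z \ ⋃ w ∈ t, A w) + μ (⋃ w ∈ t, A w) := by
          rw [← Set.diff_union_self]
          exact hμadd _ _ disjoint_sdiff_self_left
        have e2 : μ (A z) = μ (A z \ ⋃ w ∈ t, A w) + μ (A z ∩ ⋃ w ∈ t, A w) := by
          conv_lhs => rw [← Set.diff_union_inter (A z) (⋃ w ∈ t, A w)]
          exact hμadd _ _ (disjoint_sdiff_left.mono_right inter_subset_right)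
        have e3 : μ (A z ∩ ⋃ w ∈ t, A w) = 0 := hμfin _ hfinz
        rw [Finset.sum_insert hzt, hUeq, e1]
        have : μ (A z \ ⋃ w ∈ t, A w) = μ (A z) := by rw [e2, e3, add_zero]
        rw [this]
        linarith [ih]
    have hle1 : ∑ z ∈ s, μ (A z) ≤ 1 := (hsum s).trans (hμ1 _)
    have hsne : s.Nonempty := Finset.card_pos.mp (by omega)
    have hgt : ∀ z ∈ s, 1/(q+1:ℝ) < μ (A z) := fun z hz => hs_sub hz
    have hlow : (s.card : ℝ) * (1/(q+1:ℝ)) < ∑ z ∈ s, μ (A z) := by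
      calc (s.card : ℝ) * (1/(q+1:ℝ)) = ∑ _z ∈ s, 1/(q+1:ℝ) := by
            rw [Finset.sum_const, nsmul_eq_mul]
        _ < ∑ z ∈ s, μ (A z) := Finset.sum_lt_sum_of_nonempty hsne hgt
    rw [hs_card] at hlow
    have hq1 : (1:ℝ) < ((q:ℝ)+2) * (1/(q+1:ℝ)) := by
      rw [mul_one_div, lt_div_iff₀ (by positivity)]
      norm_num
    push_cast at hlow
    linarith
  -- pick a member of the family of measure zero
  have hzex : ∃ z : ℕ → Bool, μ (A z) = 0 := by
    by_contra hno
    push_neg at hno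
    have hcov : (univ : Set (ℕ → Bool)) ⊆ ⋃ q : ℕ, {z | 1/(q+1:ℝ) < μ (A z)} := by
      intro z _
      have hpos' : 0 < μ (A z) := lt_of_le_of_ne (hμ0 _) (Ne.symm (hno z))
      obtain ⟨q, hq⟩ := exists_nat_one_div_lt hpos'
      exact mem_iUnion.mpr ⟨q, hq⟩
    have hcnt : (univ : Set (ℕ → Bool)).Countable :=
      Set.Countable.mono hcov (countable_iUnion (fun q => (hZfin q).countable))
    haveI : Countable (ℕ → Bool) := Set.countable_univ_iff.mp hcnt
    obtain ⟨e, he⟩ := exists_surjective_nat (ℕ → Bool)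
    obtain ⟨m, hm⟩ := he (fun k => !(e k k))
    have := congrFun hm m
    simp at this
  obtain ⟨z, hz0⟩ := hzex
  set B : Set ℕ := ⋃ k ∈ A z, (S k : Set ℕ) with hBdef
  have hBnotI : B ∉ I := hkey _ (hAinf z)
  have hfB : f (indic B) = 0 := hz0
  -- the filter of sets almost containing B
  set 𝔽 : Filter ℕ :=
    { sets := {X | B \ X ∈ I}
      univ_sets := by
        show B \ univ ∈ I
        rw [diff_univ]
        exact hfin _ finite_empty
      sets_of_superset := by
        intro X Y hX hXY
        exact hdown _ _ hX (diff_subset_diff_right hXY)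
      inter_sets := by
        intro X Y hX hY
        show B \ (X ∩ Y) ∈ I
        rw [Set.diff_inter]
        exact hunion _ _ hX hY } with h𝔽def
  have hmem𝔽 : ∀ X : Set ℕ, X ∈ 𝔽 ↔ B \ X ∈ I := fun X => Iff.rfl
  haveI hne𝔽 : 𝔽.NeBot := by
    rw [Filter.neBot_iff]
    intro hbot
    have : (∅ : Set ℕ) ∈ 𝔽 := hbot ▸ Filter.mem_bot
    rw [hmem𝔽, diff_empty] at this
    exact hBnotI this
  set U : Ultrafilter ℕ := Ultrafilter.of 𝔽 with hUdef
  have hUof : (U : Filter ℕ) ≤ 𝔽 := Ultrafilter.of_le 𝔽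
  have hBU : B ∈ U := hUof (by rw [hmem𝔽, Set.diff_self]; exact hfin _ finite_empty)
  have hUI : ∀ A' ∈ I, A'ᶜ ∈ U := by
    intro A' hA'
    apply hUof
    rw [hmem𝔽]
    refine hdown A' _ hA' ?_
    intro i hi
    exact not_not.mp hi.2
  have hUcof : (U : Filter ℕ) ≤ cofinite := by
    intro X hX
    apply hUof
    rw [hmem𝔽]
    exact hfin _ (Set.Finite.subset hX (fun i hi => hi.2))
  -- the second functional
  set g : LInf →L[ℝ] ℝ := gfun U with hgdef
  have hgpos : ∀ x : LInf, (∀ i, 0 ≤ x i) → 0 ≤ g x := by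
    intro x hx
    rw [hgdef, gfun_apply]
    exact ge_of_tendsto (glim_spec U x) (Eventually.of_forall hx)
  have hglimit : ∀ (x : LInf) (a : ℝ), Tendsto (fun i => x i) atTop (𝓝 a) → g x = a := by
    intro x a hx
    rw [hgdef, gfun_apply]
    exact glim_eq U (hx.mono_left (hUcof.trans (le_of_eq Nat.cofinite_eq_atTop)))
  have hgvanish : ∀ A' ∈ I, g (indic A') = 0 := by
    intro A' hA'
    rw [hgdef, gfun_apply]
    apply glim_eq
    have h0 : Tendsto (fun _ : ℕ => (0:ℝ)) (U : Filter ℕ) (𝓝 0) := tendsto_const_nhds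
    refine Tendsto.congr' ?_ h0
    filter_upwards [hUI A' hA'] with i hi
    rw [indic_apply, if_neg hi]
  have hgSLI : g ∈ SLI I := ⟨hgpos, hglimit, hgvanish⟩
  have hgB : g (indic B) = 1 := by
    rw [hgdef, gfun_apply]
    apply glim_eq
    have h1 : Tendsto (fun _ : ℕ => (1:ℝ)) (U : Filter ℕ) (𝓝 1) := tendsto_const_nhds
    refine Tendsto.congr' ?_ h1
    filter_upwards [hBU] with i hi
    rw [indic_apply, if_pos hi]
  refine ⟨g, hgSLI, ?_⟩
  apply le_antisymm
  · apply ContinuousLinearMap.opNorm_le_bound _ (by norm_num)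
    intro x
    rw [ContinuousLinearMap.sub_apply, Real.norm_eq_abs]
    calc |f x - g x| ≤ |f x| + |g x| := abs_sub _ _
      _ ≤ ‖x‖ + ‖x‖ := add_le_add (h_bound hpos hlim x) (h_bound hgpos hglimit x)
      _ = 2 * ‖x‖ := by ring
  · set w : LInf := (2:ℝ) • indic B - eone with hwdef
    have hwnorm : ‖w‖ ≤ 1 := by
      apply lp.norm_le_of_forall_le zero_le_one
      intro i
      rw [hwdef]
      have : ((2:ℝ) • indic B - eone) i = 2 * (indic B) i - 1 := by
        rw [lp.coeFn_sub, Pi.sub_apply, lp.coeFn_smul, Pi.smul_apply, eone_apply]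
        rfl
      rw [this, Real.norm_eq_abs, indic_apply]
      split <;> norm_num
    have hfe : f eone = 1 := h_eone hlim
    have hge : g eone = 1 := h_eone hglimit
    have hval : (f - g) w = -2 := by
      rw [ContinuousLinearMap.sub_apply, hwdef, map_sub, map_sub, map_smul, map_smul,
        smul_eq_mul, smul_eq_mul, hfB, hgB, hfe, hge]
      ring
    have hle := (f - g).le_opNorm w
    rw [hval] at hle
    have h2 : ‖(-2:ℝ)‖ = 2 := by norm_num
    rw [h2] at hle
    calc (2:ℝ) ≤ ‖f - g‖ * ‖w‖ := hle
      _ ≤ ‖f - g‖ * 1 := by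
          apply mul_le_mul_of_nonneg_left hwnorm (norm_nonneg _)
      _ = ‖f - g‖ := mul_one _
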